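/- For the Hermite functions φ_k, the derivative of the partial sum of squares satisfies (d/dx) ∑_{i=0}^{n−1} φ_i(x)² = −√(2n) · φ_n(x) · φ_{n−1}(x). -/

import Mathlib

open Real MeasureTheory

/-- Physicists' Hermite polynomial `H n x = (-1)^n e^{x^2} (d/dx)^n e^{-x^2}`. -/
noncomputable def physHermite (n : ℕ) (x : ℝ) : ℝ :=
  (-1)^n * Real.exp (x^2) * iteratedDeriv n (fun y => Real.exp (-y^2)) x

/-- Hermite function `φ k x = (2^k k! √π)^{-1/2} H_k(x) e^{-x²/2}`. -/
noncomputable def hermiteFn (k : ℕ) (x : ℝ) : ℝ :=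
  (Real.sqrt (2^k * k.factorial * Real.sqrt Real.pi))⁻¹ * physHermite k x * Real.exp (-x^2/2)

/-- Confluent hypergeometric function `₁F₁(-k; b; x)` with nonpositive integer first
parameter `-k`; it is the polynomial `∑_{j=0}^{k} ((-k)_j/(b)_j) x^j/j!`, where the rising
factorial `(-k)_j = (-1)^j k!/(k-j)!`. -/
noncomputable def oneF1neg (k : ℕ) (b x : ℝ) : ℝ :=
  ∑ j ∈ Finset.range (k+1),
    ((-1)^j * (k.descFactorial j : ℝ) / ∏ i ∈ Finset.range j, (b + i)) * x^j / (j.factorial : ℝ)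

/-- GUE mean density at σ² = 1/2: partial sum of squared Hermite functions. -/
noncomputable def pGUE (n : ℕ) (x : ℝ) : ℝ := ∑ k ∈ Finset.range n, hermiteFn k x ^ 2

/-- GUE mean density with general variance σ². -/
noncomputable def pGUEvar (n : ℕ) (σ x : ℝ) : ℝ :=
  (σ * Real.sqrt 2)⁻¹ * pGUE n (x / (σ * Real.sqrt 2))

/-- The function τₙ from the GSE/GOE densities. -/
noncomputable def tauFn (n : ℕ) (x : ℝ) : ℝ :=
  Real.sqrt (n/2) * hermiteFn (n-1) x *
    ((1/2) * ∫ t : ℝ, Real.sign (x - t) * hermiteFn n t)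

/-- The function αₙ (for odd n) from the GOE density. -/
noncomputable def alphaFn (n : ℕ) (x : ℝ) : ℝ :=
  hermiteFn (n-1) x / ∫ t : ℝ, hermiteFn (n-1) t

/-!
The polynomials `H_n` satisfy `H_n' = 2n H_{n-1}` and `H_{n+1} = 2x H_n - 2n H_{n-1}`, which
together with `c_k = √(2(k+1)) c_{k+1}` for the normalizing constants give the ladder relation
`2 φ_k' = √(2k) φ_{k-1} - √(2(k+1)) φ_{k+1}`. Hence `(φ_k²)' = a_k - a_{k+1}` with
`a_k = √(2k) φ_k φ_{k-1}`, and the sum telescopes to `a_0 - a_n = -a_n`.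
-/

open Polynomial

noncomputable def physHermitePoly : ℕ → ℝ[X]
  | 0 => 1
  | n + 1 => 2 * X * physHermitePoly n - derivative (physHermitePoly n)

lemma physHermitePoly_succ (n : ℕ) :
    physHermitePoly (n + 1) = 2 * X * physHermitePoly n - derivative (physHermitePoly n) :=
  rfl

lemma derivative_physHermitePoly_succ (n : ℕ) :
    derivative (physHermitePoly (n + 1)) = 2 * (n + 1 : ℝ[X]) * physHermitePoly n := by
  induction n with
  | zero => simp [physHermitePoly]
  | succ n ih =>
    have ih' : derivative (derivative (physHermitePoly (n + 1))) =
        2 * (n + 1 : ℝ[X]) * derivative (physHermitePoly n) := by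
      rw [ih, derivative_mul]; simp
    rw [physHermitePoly_succ (n + 1), derivative_sub, derivative_mul, derivative_mul, ih', ih,
      physHermitePoly_succ n]
    simp only [derivative_ofNat, derivative_X]
    push_cast
    ring

lemma derivative_physHermitePoly (n : ℕ) :
    derivative (physHermitePoly n) = 2 * (n : ℝ[X]) * physHermitePoly (n - 1) := by
  cases n with
  | zero => simp [physHermitePoly]
  | succ n => simpa using derivative_physHermitePoly_succ n

lemma aeval_physHermitePoly_succ (n : ℕ) (x : ℝ) :
    aeval x (physHermitePoly (n + 1)) =
      2 * x * aeval x (physHermitePoly n) - 2 * n * aeval x (physHermitePoly (n - 1)) := by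
  rw [physHermitePoly_succ, derivative_physHermitePoly]
  simp

lemma iteratedDeriv_exp_neg_sq (n : ℕ) (x : ℝ) :
    iteratedDeriv n (fun y => Real.exp (-y ^ 2)) x =
      (-1) ^ n * aeval x (physHermitePoly n) * Real.exp (-x ^ 2) := by
  induction n generalizing x with
  | zero => simp [physHermitePoly]
  | succ n ih =>
    have hP := (physHermitePoly n).hasDerivAt_aeval x
    have hG : HasDerivAt (fun y : ℝ => Real.exp (-y ^ 2)) (-(2 * x) * Real.exp (-x ^ 2)) x := by
      simpa [mul_comm] using ((hasDerivAt_pow 2 x).neg).exp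
    rw [iteratedDeriv_succ, funext ih, ((hP.const_mul ((-1 : ℝ) ^ n)).fun_mul hG).deriv,
      physHermitePoly_succ]
    simp only [map_sub, map_mul, map_ofNat, aeval_X]
    ring

lemma physHermite_eq_aeval (n : ℕ) (x : ℝ) :
    physHermite n x = aeval x (physHermitePoly n) := by
  rw [physHermite, iteratedDeriv_exp_neg_sq]
  calc (-1) ^ n * Real.exp (x ^ 2) * ((-1) ^ n * aeval x (physHermitePoly n) * Real.exp (-x ^ 2))
      = ((-1) ^ n) ^ 2 * (Real.exp (x ^ 2) * Real.exp (-x ^ 2)) * aeval x (physHermitePoly n) := by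
        ring
    _ = aeval x (physHermitePoly n) := by
        rw [← Real.exp_add, add_neg_cancel, Real.exp_zero, ← pow_mul, mul_comm n, pow_mul]
        simp

noncomputable def hermiteNormConst (k : ℕ) : ℝ :=
  (Real.sqrt (2 ^ k * k.factorial * Real.sqrt Real.pi))⁻¹

lemma hermiteFn_eq (k : ℕ) (x : ℝ) :
    hermiteFn k x = hermiteNormConst k * (aeval x (physHermitePoly k) * Real.exp (-x ^ 2 / 2)) := by
  rw [hermiteFn, physHermite_eq_aeval, hermiteNormConst, mul_assoc]

lemma hermiteNormConst_eq_sqrt_mul_succ (k : ℕ) :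
    hermiteNormConst k = Real.sqrt (2 * (k + 1)) * hermiteNormConst (k + 1) := by
  have hsplit : Real.sqrt (2 ^ (k + 1) * (k + 1).factorial * Real.sqrt Real.pi) =
      Real.sqrt (2 * (k + 1)) * Real.sqrt (2 ^ k * k.factorial * Real.sqrt Real.pi) := by
    rw [← Real.sqrt_mul (by positivity)]
    congr 1
    push_cast [Nat.factorial_succ]
    ring
  have hpos : 0 < Real.sqrt (2 * (k + 1)) := Real.sqrt_pos.mpr (by positivity)
  rw [hermiteNormConst, hermiteNormConst, hsplit, mul_inv, ← mul_assoc, mul_inv_cancel₀ hpos.ne',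
    one_mul]

lemma sqrt_mul_hermiteNormConst_pred (k : ℕ) :
    Real.sqrt (2 * k) * hermiteNormConst (k - 1) = 2 * k * hermiteNormConst k := by
  cases k with
  | zero => simp
  | succ k =>
    rw [Nat.add_sub_cancel, hermiteNormConst_eq_sqrt_mul_succ, ← mul_assoc]
    push_cast
    rw [Real.mul_self_sqrt (by positivity)]

lemma hasDerivAt_exp_neg_sq_div_two (x : ℝ) :
    HasDerivAt (fun y => Real.exp (-y ^ 2 / 2)) (-x * Real.exp (-x ^ 2 / 2)) x := by
  have h : HasDerivAt (fun y : ℝ => -y ^ 2 / 2) (-x) x :=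
    ((hasDerivAt_pow 2 x).fun_neg.div_const 2).congr_deriv (by ring)
  simpa [mul_comm] using h.exp

-- At `k = 0` the truncated `k - 1` is harmless: its coefficient `√(2k)` vanishes.
lemma hasDerivAt_hermiteFn (k : ℕ) (x : ℝ) :
    HasDerivAt (hermiteFn k)
      ((Real.sqrt (2 * k) * hermiteFn (k - 1) x
        - Real.sqrt (2 * (k + 1)) * hermiteFn (k + 1) x) / 2) x := by
  have h := (((physHermitePoly k).hasDerivAt_aeval x).fun_mul
    (hasDerivAt_exp_neg_sq_div_two x)).const_mul (hermiteNormConst k)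
  rw [show hermiteFn k = _ from funext (hermiteFn_eq k)]
  refine h.congr_deriv ?_
  rw [hermiteFn_eq, hermiteFn_eq, aeval_physHermitePoly_succ, derivative_physHermitePoly]
  simp only [map_mul, map_ofNat, map_natCast]
  linear_combination
    -(aeval x (physHermitePoly (k - 1)) * Real.exp (-x ^ 2 / 2) / 2) *
      sqrt_mul_hermiteNormConst_pred k +
    (k * aeval x (physHermitePoly (k - 1)) - x * aeval x (physHermitePoly k)) *
      Real.exp (-x ^ 2 / 2) * hermiteNormConst_eq_sqrt_mul_succ k

lemma hasDerivAt_hermiteFn_sq (k : ℕ) (x : ℝ) :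
    HasDerivAt (fun y => hermiteFn k y ^ 2)
      (Real.sqrt (2 * k) * hermiteFn k x * hermiteFn (k - 1) x
        - Real.sqrt (2 * (k + 1)) * hermiteFn (k + 1) x * hermiteFn k x) x := by
  refine ((hasDerivAt_hermiteFn k x).fun_pow 2).congr_deriv ?_
  norm_num
  ring

theorem deriv_sum_sq_hermiteFn (n : ℕ) (x : ℝ) :
    deriv (fun y => ∑ i ∈ Finset.range n, hermiteFn i y ^ 2) x =
      -Real.sqrt (2*n) * hermiteFn n x * hermiteFn (n-1) x := by
  set a : ℕ → ℝ := fun k => Real.sqrt (2 * k) * hermiteFn k x * hermiteFn (k - 1) x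
  have hsum : HasDerivAt (fun y => ∑ i ∈ Finset.range n, hermiteFn i y ^ 2)
      (∑ i ∈ Finset.range n, (a i - a (i + 1))) x :=
    HasDerivAt.fun_sum fun i _ => by simpa [a] using hasDerivAt_hermiteFn_sq i x
  rw [hsum.deriv, Finset.sum_range_sub']
  simp [a]
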